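/- arXiv:1905.06064 — 3 statements merged into one kernel-verified Lean document; each statement's English description precedes it below -/
import Mathlib

section
/- Let s ≠ t be real numbers and let A(s,t) = {(x,y) ∈ ℝ² : min{x,y} < s and min{x,y} < t and s < max{x,y} and t < max{x,y}} (i.e., both s and t lie strictly between x and y). Then for any μ > 0, ∫_{A(s,t)} |x−y|^{−2−μ} d(x,y) = (2/(μ(1+μ))) · |t−s|^{−μ}. -/
/-!
For `s < t`, `A(s,t)` is the union of the quadrant `{x < s, t < y}` and its mirror image under
`(x, y) ↦ (y, x)`, which preserves the integrand. On the quadrant, Fubini reduces the integral of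
`(y - x) ^ a` (with `a = -2 - μ`) to two power integrals over half-lines:
`∫_{y > t} (y - x) ^ a dy = (t - x) ^ (a + 1) / (-a - 1)` and then
`∫_{x < s} (t - x) ^ (a + 1) dx = (t - s) ^ (a + 2) / (-a - 2)`.
-/

open MeasureTheory Set

section HalfLines

variable {a : ℝ}

theorem integrableOn_Ioi_sub_const_rpow {x c : ℝ} (ha : a < -1) (hx : x < c) :
    IntegrableOn (fun y => (y - x) ^ a) (Ioi c) := by
  rw [← (measurePreserving_add_right volume x).integrableOn_comp_preimage
    (MeasurableEquiv.addRight x).measurableEmbedding]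
  simpa [Function.comp_def] using integrableOn_Ioi_rpow_of_lt ha (sub_pos.2 hx)

theorem integral_Ioi_sub_const_rpow {x c : ℝ} (ha : a < -1) (hx : x < c) :
    ∫ y in Ioi c, (y - x) ^ a = -(c - x) ^ (a + 1) / (a + 1) := by
  rw [← (measurePreserving_add_right volume x).setIntegral_preimage_emb
    (MeasurableEquiv.addRight x).measurableEmbedding]
  simpa using integral_Ioi_rpow_of_lt ha (sub_pos.2 hx)

theorem integrableOn_Iio_const_sub_rpow {s t : ℝ} (ha : a < -1) (hst : s < t) :
    IntegrableOn (fun x => (t - x) ^ a) (Iio s) := by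
  rw [← (Measure.measurePreserving_sub_left volume t).integrableOn_comp_preimage
    (MeasurableEquiv.subLeft t).measurableEmbedding]
  simpa [Function.comp_def] using integrableOn_Ioi_rpow_of_lt ha (sub_pos.2 hst)

theorem integral_Iio_const_sub_rpow {s t : ℝ} (ha : a < -1) (hst : s < t) :
    ∫ x in Iio s, (t - x) ^ a = -(t - s) ^ (a + 1) / (a + 1) := by
  rw [← (Measure.measurePreserving_sub_left volume t).setIntegral_preimage_emb
    (MeasurableEquiv.subLeft t).measurableEmbedding]
  simpa using integral_Ioi_rpow_of_lt ha (sub_pos.2 hst)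

end HalfLines

section Quadrant

variable {a s t : ℝ}

theorem integral_Ioi_abs_sub_rpow {x : ℝ} (ha : a < -1) (hx : x < t) :
    ∫ y in Ioi t, |x - y| ^ a = -(t - x) ^ (a + 1) / (a + 1) := by
  rw [← integral_Ioi_sub_const_rpow ha hx]
  refine setIntegral_congr_fun measurableSet_Ioi fun y (hy : t < y) => ?_
  rw [abs_sub_comm, abs_of_pos (by linarith)]

theorem integrableOn_Iio_prod_Ioi_abs_sub_rpow (ha : a < -2) (hst : s < t) :
    IntegrableOn (fun p : ℝ × ℝ => |p.1 - p.2| ^ a) (Iio s ×ˢ Ioi t) := by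
  rw [IntegrableOn, Measure.volume_eq_prod, ← Measure.prod_restrict,
    integrable_prod_iff (Measurable.aestronglyMeasurable (by fun_prop))]
  constructor
  · filter_upwards [ae_restrict_mem measurableSet_Iio] with x (hx : x < s)
    refine (integrableOn_Ioi_sub_const_rpow (a := a) (by linarith) (hx.trans hst)).congr_fun
      (fun y (hy : t < y) => ?_) measurableSet_Ioi
    rw [abs_sub_comm, abs_of_pos (by linarith)]
  · refine IntegrableOn.congr_fun ((integrableOn_Iio_const_sub_rpow (a := a + 1) (by linarith)
      hst).neg.div_const (a + 1)) (fun x (hx : x < s) => ?_) measurableSet_Iio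
    simp only [Pi.neg_apply, Real.norm_eq_abs, abs_of_nonneg (Real.rpow_nonneg (abs_nonneg _) _)]
    exact (integral_Ioi_abs_sub_rpow (by linarith) (hx.trans hst)).symm

theorem integral_Iio_prod_Ioi_abs_sub_rpow (ha : a < -2) (hst : s < t) :
    ∫ p in Iio s ×ˢ Ioi t, |p.1 - p.2| ^ a = (t - s) ^ (a + 2) / ((a + 1) * (a + 2)) := by
  rw [Measure.volume_eq_prod, setIntegral_prod _
      (by simpa [Measure.volume_eq_prod] using integrableOn_Iio_prod_Ioi_abs_sub_rpow ha hst),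
    setIntegral_congr_fun measurableSet_Iio
      fun x (hx : x < s) => integral_Ioi_abs_sub_rpow (by linarith) (hx.trans hst),
    integral_div, integral_neg, integral_Iio_const_sub_rpow (by linarith) hst]
  rw [show a + 1 + 1 = a + 2 by ring]
  field_simp

end Quadrant

/-- The set `A(s,t)`. -/
def straddlingPairs (s t : ℝ) : Set (ℝ × ℝ) :=
  {p | min p.1 p.2 < s ∧ min p.1 p.2 < t ∧ s < max p.1 p.2 ∧ t < max p.1 p.2}

theorem straddlingPairs_comm (s t : ℝ) : straddlingPairs s t = straddlingPairs t s := by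
  ext p
  simp only [straddlingPairs, mem_ofPred_eq]
  tauto

theorem straddlingPairs_eq_union {s t : ℝ} (hst : s < t) :
    straddlingPairs s t = Iio s ×ˢ Ioi t ∪ Ioi t ×ˢ Iio s := by
  ext ⟨x, y⟩
  simp only [straddlingPairs, mem_ofPred_eq, min_lt_iff, lt_max_iff, mem_union, mem_prod, mem_Iio,
    mem_Ioi]
  grind

theorem integral_straddlingPairs_abs_sub_rpow {a s t : ℝ} (ha : a < -2) (hst : s < t) :
    ∫ p in straddlingPairs s t, |p.1 - p.2| ^ a =
      2 * ((t - s) ^ (a + 2) / ((a + 1) * (a + 2))) := by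
  set f : ℝ × ℝ → ℝ := fun p => |p.1 - p.2| ^ a
  have hf_swap : ∀ p, f p.swap = f p := fun p => by
    simp only [f, Prod.fst_swap, Prod.snd_swap, abs_sub_comm]
  have hint : IntegrableOn f (Iio s ×ˢ Ioi t) := integrableOn_Iio_prod_Ioi_abs_sub_rpow ha hst
  have hint_swap : IntegrableOn f (Ioi t ×ˢ Iio s) := by
    rw [IntegrableOn, Measure.volume_eq_prod, ← Measure.prod_restrict] at hint ⊢
    simpa only [Function.comp_def, hf_swap] using hint.swap
  have hdisj : Disjoint (Iio s ×ˢ Ioi t) (Ioi t ×ˢ Iio s) :=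
    disjoint_prod.2 (.inl (Ioi_disjoint_Iio_of_le hst.le).symm)
  have hswap : ∫ p in Ioi t ×ˢ Iio s, f p = ∫ p in Iio s ×ˢ Ioi t, f p := by
    simp only [Measure.volume_eq_prod, ← setIntegral_prod_swap (Iio s) (Ioi t) f, hf_swap]
  rw [straddlingPairs_eq_union hst,
    setIntegral_union hdisj (measurableSet_Ioi.prod measurableSet_Iio) hint hint_swap, hswap,
    integral_Iio_prod_Ioi_abs_sub_rpow ha hst, two_mul]

/-- For `s ≠ t`, the integral of `|x−y|^(−2−μ)` over the set of `(x,y)` with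
`min{x,y} < s,t < max{x,y}` equals `(2/(μ(1+μ))) · |t−s|^(−μ)`. -/
theorem integral_over_Ast (s t : ℝ) (hst : s ≠ t) (μ : ℝ) (hμ : 0 < μ) :
    ∫ p : ℝ × ℝ in {p : ℝ × ℝ | min p.1 p.2 < s ∧ min p.1 p.2 < t ∧
      s < max p.1 p.2 ∧ t < max p.1 p.2},
      |p.1 - p.2| ^ (-2 - μ) = 2 / (μ * (1 + μ)) * |t - s| ^ (-μ) := by
  change ∫ p in straddlingPairs s t, _ = _
  wlog hlt : s < t generalizing s t
  · rw [straddlingPairs_comm, abs_sub_comm]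
    exact this t s hst.symm (lt_of_le_of_ne (not_lt.1 hlt) hst.symm)
  rw [integral_straddlingPairs_abs_sub_rpow (by linarith) hlt, abs_of_pos (sub_pos.2 hlt),
    show -2 - μ + 2 = -μ by ring, show (-2 - μ + 1) * -μ = μ * (1 + μ) by ring]
  ring
end

section
/- Let γ: ℝ/ℤ → ℝ^d be an arc-length parametrized C¹ curve. Then for all x ≠ y (with |x−y| interpreted as arclength parameter distance), |γ(x)−γ(y)|²/|x−y|² = 1 − (1/2)·⨍₀¹⨍₀¹ |γ'(x+θ₁(y−x)) − γ'(x+θ₂(y−x))|² dθ₁ dθ₂. In particular, if |γ'(s)−γ'(t)| ≤ C|s−t|^β for all s,t, then |γ(x)−γ(y)|²/|x−y|² ≥ 1 − C²|x−y|^{2β}. -/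
/-!
By the fundamental theorem of calculus, `(γ y - γ x) / (y - x)` is the mean of the unit vectors
`g (x + θ (y - x))` over `θ ∈ [0, 1]`. The squared norm of the mean of unit vectors `h` is the double
mean of `⟪h a, h b⟫ = 1 - ‖h a - h b‖² / 2`. Under the Hölder bound, two points of the segment are at
distance at most `|x - y|`, which bounds the integrand by `C² |x - y|^(2β)`; a Hölder bound with
`β < 0` forces `g` to be constant.
-/

open MeasureTheory Filter Topology
open scoped Interval

section UnitVectors

variable {α E : Type*} [MeasurableSpace α] {μ : Measure α} [IsProbabilityMeasure μ]
  [NormedAddCommGroup E] [InnerProductSpace ℝ E] [CompleteSpace E] {h : α → E}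

theorem norm_integral_sq_eq_one_sub_integral_integral_norm_sub_sq
    (hm : AEStronglyMeasurable h μ) (hunit : ∀ᵐ a ∂μ, ‖h a‖ = 1) :
    ‖∫ a, h a ∂μ‖ ^ 2 = 1 - (1 / 2) * ∫ a, ∫ b, ‖h a - h b‖ ^ 2 ∂μ ∂μ := by
  have hint : Integrable h μ := .of_bound hm 1 (hunit.mono fun a ha => ha.le)
  have hinner : ∀ᵐ a ∂μ,
      ∫ b, ‖h a - h b‖ ^ 2 ∂μ = 2 - 2 * inner ℝ (h a) (∫ b, h b ∂μ) := by
    filter_upwards [hunit] with a ha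
    calc ∫ b, ‖h a - h b‖ ^ 2 ∂μ = ∫ b, (2 - 2 * inner ℝ (h a) (h b)) ∂μ := by
          refine integral_congr_ae (hunit.mono fun b hb => ?_)
          simp only [norm_sub_sq_real, ha, hb]
          ring
      _ = 2 - 2 * inner ℝ (h a) (∫ b, h b ∂μ) := by
          rw [integral_sub (integrable_const _) ((hint.const_inner _).const_mul 2),
            integral_const_mul, integral_inner hint]
          simp
  have houter : ∫ a, ∫ b, ‖h a - h b‖ ^ 2 ∂μ ∂μ = 2 - 2 * ‖∫ a, h a ∂μ‖ ^ 2 := by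
    rw [integral_congr_ae hinner,
      integral_sub (integrable_const _) ((hint.inner_const _).const_mul 2), integral_const_mul]
    simp_rw [real_inner_comm (∫ b, h b ∂μ)]
    rw [integral_inner hint, real_inner_self_eq_norm_sq]
    simp
  rw [houter]
  ring

end UnitVectors

section Curve

variable {E : Type*} [NormedAddCommGroup E] [NormedSpace ℝ E] [CompleteSpace E]
  {γ g : ℝ → E} {x y : ℝ}

theorem sub_eq_smul_intervalIntegral_comp_add_mul
    (hderiv : ∀ t ∈ Set.uIcc x y, HasDerivAt γ (g t) t) (hint : IntervalIntegrable g volume x y) :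
    γ y - γ x = (y - x) • ∫ θ in (0:ℝ)..1, g (x + θ * (y - x)) := by
  have hsubst := intervalIntegral.smul_integral_comp_add_mul (a := 0) (b := 1) g (y - x) x
  simp only [mul_zero, add_zero, mul_one, add_sub_cancel] at hsubst
  simp_rw [mul_comm _ (y - x), hsubst]
  exact (intervalIntegral.integral_eq_sub_of_hasDerivAt hderiv hint).symm

theorem norm_sub_sq_div_sq_eq_norm_intervalIntegral_sq
    (hderiv : ∀ t ∈ Set.uIcc x y, HasDerivAt γ (g t) t) (hint : IntervalIntegrable g volume x y)
    (hxy : x ≠ y) :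
    ‖γ x - γ y‖ ^ 2 / |x - y| ^ 2 = ‖∫ θ in (0:ℝ)..1, g (x + θ * (y - x))‖ ^ 2 := by
  have hne : |x - y| ≠ 0 := abs_ne_zero.mpr (sub_ne_zero.mpr hxy)
  rw [norm_sub_rev, sub_eq_smul_intervalIntegral_comp_add_mul hderiv hint, norm_smul,
    Real.norm_eq_abs, abs_sub_comm, mul_pow, mul_div_cancel_left₀ _ (pow_ne_zero 2 hne)]

end Curve

section Holder

variable {E : Type*} [NormedAddCommGroup E] {f : ℝ → E} {C β : ℝ}

theorem eq_of_norm_sub_le_mul_abs_rpow_of_neg (hβ : β < 0)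
    (hf : ∀ s t, ‖f s - f t‖ ≤ C * |s - t| ^ β) (s t : ℝ) : f s = f t := by
  have hfar : ∀ a : ℝ, Tendsto (fun u => |a - u| ^ β) atTop (𝓝 0) := fun a => by
    have hdist : Tendsto (fun u => |a - u|) atTop atTop := by
      simp_rw [abs_sub_comm a]
      exact tendsto_abs_atTop_atTop.comp (tendsto_atTop_add_const_right _ (-a) tendsto_id)
    have hdecay := tendsto_rpow_neg_atTop (neg_pos.mpr hβ)
    rw [neg_neg] at hdecay
    exact hdecay.comp hdist
  have hlim : Tendsto (fun u => C * |s - u| ^ β + C * |t - u| ^ β) atTop (𝓝 0) := by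
    simpa using ((hfar s).const_mul C).add ((hfar t).const_mul C)
  have hle : ‖f s - f t‖ ≤ 0 := ge_of_tendsto' hlim fun u =>
    calc ‖f s - f t‖ ≤ ‖f s - f u‖ + ‖f u - f t‖ := norm_sub_le_norm_sub_add_norm_sub _ _ _
      _ = ‖f s - f u‖ + ‖f t - f u‖ := by rw [norm_sub_rev (f u)]
      _ ≤ _ := add_le_add (hf s u) (hf t u)
  exact sub_eq_zero.mp (norm_le_zero_iff.mp hle)

theorem norm_sub_sq_le_of_holder_of_abs_sub_le (hβ : 0 ≤ β)
    (hf : ∀ s t, ‖f s - f t‖ ≤ C * |s - t| ^ β) {a b r : ℝ} (hab : |a - b| ≤ r) :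
    ‖f a - f b‖ ^ 2 ≤ C ^ 2 * r ^ (2 * β) := by
  have hC : 0 ≤ C := by simpa using (norm_nonneg _).trans (hf 1 0)
  have hbound : ‖f a - f b‖ ≤ C * r ^ β :=
    (hf a b).trans (mul_le_mul_of_nonneg_left (Real.rpow_le_rpow (abs_nonneg _) hab hβ) hC)
  calc ‖f a - f b‖ ^ 2 ≤ (C * r ^ β) ^ 2 := pow_le_pow_left₀ (norm_nonneg _) hbound 2
    _ = C ^ 2 * r ^ (2 * β) := by
      rw [mul_pow, ← Real.rpow_natCast (r ^ β), ← Real.rpow_mul ((abs_nonneg _).trans hab), mul_comm β]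
      norm_num

theorem integral_integral_norm_sub_sq_le_of_holder
    (hf : ∀ s t, ‖f s - f t‖ ≤ C * |s - t| ^ β) (x y : ℝ) :
    ∫ θ₁ in (0:ℝ)..1, ∫ θ₂ in (0:ℝ)..1, ‖f (x + θ₁ * (y - x)) - f (x + θ₂ * (y - x))‖ ^ 2
      ≤ C ^ 2 * |x - y| ^ (2 * β) := by
  rcases le_or_gt 0 β with hβ | hβ
  · set K := C ^ 2 * |x - y| ^ (2 * β)
    have hpt : ∀ θ₁ ∈ Ι (0:ℝ) 1, ∀ θ₂ ∈ Ι (0:ℝ) 1,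
        ‖‖f (x + θ₁ * (y - x)) - f (x + θ₂ * (y - x))‖ ^ 2‖ ≤ K := by
      intro θ₁ h₁ θ₂ h₂
      rw [Set.uIoc_of_le zero_le_one] at h₁ h₂
      refine (Real.norm_of_nonneg (sq_nonneg _)).trans_le
        (norm_sub_sq_le_of_holder_of_abs_sub_le hβ hf ?_)
      rw [show x + θ₁ * (y - x) - (x + θ₂ * (y - x)) = (θ₁ - θ₂) * (y - x) by ring, abs_mul,
        abs_sub_comm y x]
      exact mul_le_of_le_one_left (abs_nonneg _)
        (abs_sub_le_iff.mpr ⟨by linarith [h₁.2, h₂.1], by linarith [h₁.1, h₂.2]⟩)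
    refine (le_abs_self _).trans ?_
    calc ‖∫ θ₁ in (0:ℝ)..1, ∫ θ₂ in (0:ℝ)..1,
          ‖f (x + θ₁ * (y - x)) - f (x + θ₂ * (y - x))‖ ^ 2‖ ≤ K * |1 - 0| :=
          intervalIntegral.norm_integral_le_of_norm_le_const fun θ₁ h₁ =>
            (intervalIntegral.norm_integral_le_of_norm_le_const (hpt θ₁ h₁)).trans_eq (by simp)
      _ = K := by simp
  · have hzero : ∀ s t, f s - f t = 0 := fun s t =>
      sub_eq_zero.mpr (eq_of_norm_sub_le_mul_abs_rpow_of_neg hβ hf s t)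
    simp only [hzero, norm_zero, zero_pow two_ne_zero, intervalIntegral.integral_zero]
    positivity

end Holder

/-- For an arc-length parametrized `C¹` curve `γ` with derivative `g` (`‖g‖ ≡ 1`):
`‖γ(x)−γ(y)‖²/|x−y|² = 1 − ½ ∫₀¹∫₀¹ ‖g(x+θ₁(y−x)) − g(x+θ₂(y−x))‖² dθ₁ dθ₂`,
and if `g` is `β`-Hölder with constant `C` then
`‖γ(x)−γ(y)‖²/|x−y|² ≥ 1 − C²|x−y|^{2β}`. -/
theorem chord_arc_identity (d : ℕ) (γ g : ℝ → EuclideanSpace ℝ (Fin d))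
    (hderiv : ∀ x, HasDerivAt γ (g x) x) (hunit : ∀ x, ‖g x‖ = 1) :
    (∀ x y : ℝ, x ≠ y →
      ‖γ x - γ y‖ ^ 2 / |x - y| ^ 2 =
        1 - (1 / 2) *
          ∫ θ₁ in (0:ℝ)..1, ∫ θ₂ in (0:ℝ)..1,
            ‖g (x + θ₁ * (y - x)) - g (x + θ₂ * (y - x))‖ ^ 2) ∧
    ∀ C β : ℝ, (∀ s t : ℝ, ‖g s - g t‖ ≤ C * |s - t| ^ β) →
      ∀ x y : ℝ, x ≠ y →
        1 - C ^ 2 * |x - y| ^ (2 * β) ≤ ‖γ x - γ y‖ ^ 2 / |x - y| ^ 2 := by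
  have hg : Measurable g := funext (fun s => (hderiv s).deriv) ▸ measurable_deriv γ
  have hint : ∀ x y, IntervalIntegrable g volume x y := fun x y =>
    (intervalIntegrable_const (c := (1:ℝ))).mono_fun hg.aestronglyMeasurable (ae_of_all _ fun s => by simp [hunit])
  have hchord : ∀ x y : ℝ, x ≠ y →
      ‖γ x - γ y‖ ^ 2 / |x - y| ^ 2 =
        1 - (1 / 2) * ∫ θ₁ in (0:ℝ)..1, ∫ θ₂ in (0:ℝ)..1,
          ‖g (x + θ₁ * (y - x)) - g (x + θ₂ * (y - x))‖ ^ 2 := fun x y hxy => by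
    have : IsProbabilityMeasure (volume.restrict (Set.Ioc (0:ℝ) 1)) := ⟨by simp⟩
    rw [norm_sub_sq_div_sq_eq_norm_intervalIntegral_sq (fun t _ => hderiv t) (hint x y) hxy]
    simp only [intervalIntegral.integral_of_le zero_le_one]
    exact norm_integral_sq_eq_one_sub_integral_integral_norm_sub_sq
      (hg.comp (by fun_prop)).aestronglyMeasurable (ae_of_all _ fun θ => hunit _)
  refine ⟨hchord, fun C β hH x y hxy => ?_⟩
  have hnonneg : 0 ≤ ∫ θ₁ in (0:ℝ)..1, ∫ θ₂ in (0:ℝ)..1,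
      ‖g (x + θ₁ * (y - x)) - g (x + θ₂ * (y - x))‖ ^ 2 :=
    intervalIntegral.integral_nonneg zero_le_one fun θ₁ _ =>
      intervalIntegral.integral_nonneg zero_le_one fun θ₂ _ => by positivity
  rw [hchord x y hxy]
  linarith [integral_integral_norm_sub_sq_le_of_holder hH x y]
end

section
/- Let γ: ℝ/ℤ → ℝ³ be parametrized by arc-length (|γ'| ≡ 1). Then for all non-antipodal x, y ∈ ℝ/ℤ: |γ(x)−γ(y)|²/ρ(x,y)² = 1 − (1/2)·⨍_x^y⨍_x^y |γ'(s)−γ'(t)|² ds dt, where ρ(x,y) is the distance on ℝ/ℤ and ⨍_x^y denotes the mean value over the shortest arc from x to y. Consequently, (1/|γ(x)−γ(y)|^α − 1/D_γ(x,y)^α)^{p/2} = ρ(x,y)^{−αp/2}·F(⟨γ',γ'⟩(x,y), 1, D_γ(x,y)/ρ(x,y)) where F(a,b,c) = ((b − a/2)^{−α/2} − c^{−α})^{p/2} and ⟨γ',γ'⟩(x,y) = ⨍_x^y⨍_x^y |γ'(s)−γ'(t)|² ds dt, so that the O'hara energy O^{α,p}(γ) equals the tangent-point energy Ẽ^{α,p}(γ').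 -/
/-!
Since `‖γ'‖ ≡ 1`, `‖γ'(s) - γ'(t)‖² = 2 - 2⟪γ'(s), γ'(t)⟫`, so integrating over the square
`[x, y]²` gives `2 (y - x)² - 2 ‖∫ₓʸ γ'‖² = 2 (y - x)² - 2 ‖γ(y) - γ(x)‖²`: this is the chord–arc
identity. For non-antipodal points `D_γ = ρ`, so the O'hara integrand factors as
`ρ^(-αp/2) F(⟨γ', γ'⟩(x, y), 1, 1)` by elementary `rpow` algebra, and the two energy integrands
agree off the null set `{y = x} ∪ {y = x + 1/2}`.
-/

open MeasureTheory

/-- The Lagrangian `F(a,b,c) = ((b − a/2)^(−α/2) − c^(−α))^(p/2)`. -/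
noncomputable def FLag (α p a b c : ℝ) : ℝ :=
  ((b - a / 2) ^ (-(α / 2)) - c ^ (-α)) ^ (p / 2)

open scoped RealInnerProductSpace

lemma Real.mul_rpow_of_pos_left {s : ℝ} (hs : 0 < s) (B q : ℝ) :
    (s * B) ^ q = s ^ q * B ^ q := by
  rcases lt_trichotomy B 0 with hB | rfl | hB
  · rw [Real.rpow_def_of_neg (mul_neg_of_pos_of_neg hs hB), Real.rpow_def_of_neg hB,
      Real.log_mul hs.ne' hB.ne, add_mul, Real.exp_add, Real.rpow_def_of_pos hs]
    ring
  · rcases eq_or_ne q 0 with rfl | hq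
    · simp
    · simp [Real.zero_rpow hq]
  · exact Real.mul_rpow hs.le hB.le

section UnitSpeed

variable {E : Type*} [NormedAddCommGroup E] [InnerProductSpace ℝ E] [CompleteSpace E]
  {g : ℝ → E}

theorem integral_integral_norm_sub_sq_of_norm_eq_one {a b : ℝ}
    (hgi : IntervalIntegrable g volume a b) (hunit : ∀ t, ‖g t‖ = 1) :
    ∫ s in a..b, ∫ t in a..b, ‖g s - g t‖ ^ 2 = 2 * (b - a) ^ 2 - 2 * ‖∫ t in a..b, g t‖ ^ 2 := by
  set c := ∫ t in a..b, g t
  have hinner (v : E) : IntervalIntegrable (fun t => ⟪v, g t⟫) volume a b ∧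
      ∫ t in a..b, ⟪v, g t⟫ = ⟪v, c⟫ :=
    ⟨⟨hgi.1.const_inner v, hgi.2.const_inner v⟩, (innerSL ℝ v).intervalIntegral_comp_comm hgi⟩
  have hpoint (s t : ℝ) : ‖g s - g t‖ ^ 2 = 2 - 2 * ⟪g s, g t⟫ := by
    rw [norm_sub_sq_real, hunit, hunit]; ring
  have hinner_integral (s : ℝ) : ∫ t in a..b, ‖g s - g t‖ ^ 2 = 2 * (b - a) - 2 * ⟪g s, c⟫ := by
    simp_rw [hpoint s]
    rw [intervalIntegral.integral_sub intervalIntegrable_const ((hinner _).1.const_mul 2),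
      intervalIntegral.integral_const, intervalIntegral.integral_const_mul, (hinner _).2,
      smul_eq_mul, mul_comm]
  simp_rw [hinner_integral, real_inner_comm c]
  rw [intervalIntegral.integral_sub intervalIntegrable_const ((hinner _).1.const_mul 2),
    intervalIntegral.integral_const, intervalIntegral.integral_const_mul, (hinner _).2,
    smul_eq_mul, real_inner_self_eq_norm_sq]
  ring

theorem norm_sub_sq_eq_of_hasDerivAt_of_norm_eq_one {γ : ℝ → E}
    (hderiv : ∀ t, HasDerivAt γ (g t) t) (hunit : ∀ t, ‖g t‖ = 1) (a b : ℝ) :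
    ‖γ b - γ a‖ ^ 2 = (b - a) ^ 2 - 1 / 2 * ∫ s in a..b, ∫ t in a..b, ‖g s - g t‖ ^ 2 := by
  have hg : StronglyMeasurable g := funext (fun t => (hderiv t).deriv) ▸ stronglyMeasurable_deriv γ
  have hgi : IntervalIntegrable g volume a b :=
    intervalIntegrable_const.mono_fun' hg.aestronglyMeasurable
      (ae_of_all _ fun t => (hunit t).le)
  rw [integral_integral_norm_sub_sq_of_norm_eq_one hgi hunit,
    intervalIntegral.integral_eq_sub_of_hasDerivAt (fun t _ => hderiv t) hgi]
  ring

end UnitSpeed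

theorem rpow_neg_sub_rpow_neg_rpow_eq_mul_FLag {α p r ρ a : ℝ} (hr : 0 ≤ r) (hρ : 0 < ρ)
    (ha : 1 - a / 2 = (r / ρ) ^ 2) :
    (r ^ (-α) - ρ ^ (-α)) ^ (p / 2) = ρ ^ (-(α * p / 2)) * FLag α p a 1 1 := by
  have hρα : 0 < ρ ^ (-α) := Real.rpow_pos_of_pos hρ _
  have hbase : (1 - a / 2) ^ (-(α / 2)) = r ^ (-α) / ρ ^ (-α) := by
    rw [ha, ← Real.rpow_two, ← Real.rpow_mul (div_nonneg hr hρ.le),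
      Real.div_rpow hr hρ.le]
    ring_nf
  calc (r ^ (-α) - ρ ^ (-α)) ^ (p / 2)
      = (ρ ^ (-α) * (r ^ (-α) / ρ ^ (-α) - 1)) ^ (p / 2) := by
        congr 1; field_simp
    _ = ρ ^ (-(α * p / 2)) * FLag α p a 1 1 := by
        rw [Real.mul_rpow_of_pos_left hρα, ← Real.rpow_mul hρ.le, FLag, Real.one_rpow, hbase]
        ring_nf

/-- Points of `ℝ/ℤ` are represented by reals; non-antipodal points by representatives with
`0 < |x − y| < 1/2`, for which `ρ(x,y) = |x − y|` and `D_γ(x,y) = min(|x−y|, 1−|x−y|)`. Both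
energies are integrated over the fundamental domain `0 ≤ x ≤ 1`, `|x − y| ≤ 1/2`. -/
theorem ohara_energy_eq_tangent_energy_general (α p : ℝ)
    (γ g : ℝ → EuclideanSpace ℝ (Fin 3))
    (hderiv : ∀ x, HasDerivAt γ (g x) x)
    (hunit : ∀ x, ‖g x‖ = 1) :
    (∀ x y : ℝ, 0 < |x - y| → |x - y| < 1 / 2 →
      ‖γ x - γ y‖ ^ 2 / |x - y| ^ 2 =
        1 - (1 / 2) * (((y - x) ^ 2)⁻¹ * ∫ s in x..y, ∫ t in x..y, ‖g s - g t‖ ^ 2)) ∧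
    (∀ x y : ℝ, 0 < |x - y| → |x - y| < 1 / 2 →
      (‖γ x - γ y‖ ^ (-α) - (min |x - y| (1 - |x - y|)) ^ (-α)) ^ (p / 2) =
        |x - y| ^ (-(α * p / 2)) *
          FLag α p (((y - x) ^ 2)⁻¹ * ∫ s in x..y, ∫ t in x..y, ‖g s - g t‖ ^ 2) 1
            (min |x - y| (1 - |x - y|) / |x - y|)) ∧
    (∫ x in (0:ℝ)..1, ∫ y in (x - 1/2)..(x + 1/2),
        (‖γ x - γ y‖ ^ (-α) - (min |x - y| (1 - |x - y|)) ^ (-α)) ^ (p / 2)) =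
      ∫ x in (0:ℝ)..1, ∫ y in (x - 1/2)..(x + 1/2),
        |x - y| ^ (-(α * p / 2)) *
          FLag α p (((y - x) ^ 2)⁻¹ * ∫ s in x..y, ∫ t in x..y, ‖g s - g t‖ ^ 2) 1
            (min |x - y| (1 - |x - y|) / |x - y|) := by
  have chord : ∀ x y : ℝ, 0 < |x - y| → |x - y| < 1 / 2 →
      ‖γ x - γ y‖ ^ 2 / |x - y| ^ 2 =
        1 - (1 / 2) * (((y - x) ^ 2)⁻¹ * ∫ s in x..y, ∫ t in x..y, ‖g s - g t‖ ^ 2) := by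
    intro x y hxy _
    have hsq : |x - y| ^ 2 = (y - x) ^ 2 := by rw [sq_abs]; ring
    have hne : y - x ≠ 0 := sub_ne_zero.2 fun h => by simp [h] at hxy
    rw [norm_sub_rev, norm_sub_sq_eq_of_hasDerivAt_of_norm_eq_one hderiv hunit, hsq]
    field_simp
  have pointwise : ∀ x y : ℝ, 0 < |x - y| → |x - y| < 1 / 2 →
      (‖γ x - γ y‖ ^ (-α) - (min |x - y| (1 - |x - y|)) ^ (-α)) ^ (p / 2) =
        |x - y| ^ (-(α * p / 2)) *
          FLag α p (((y - x) ^ 2)⁻¹ * ∫ s in x..y, ∫ t in x..y, ‖g s - g t‖ ^ 2) 1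
            (min |x - y| (1 - |x - y|) / |x - y|) := by
    intro x y hxy hhalf
    rw [min_eq_left (by linarith), div_self hxy.ne']
    exact rpow_neg_sub_rpow_neg_rpow_eq_mul_FLag (norm_nonneg _) hxy
      (by rw [div_pow, chord x y hxy hhalf]; ring)
  refine ⟨chord, pointwise, intervalIntegral.integral_congr fun x _ =>
    intervalIntegral.integral_congr_ae ?_⟩
  filter_upwards [(Set.toFinite {x, x + 1 / 2}).countable.ae_notMem volume] with y hy hyI
  rw [Set.uIoc_of_le (by linarith)] at hyI
  simp only [Set.mem_insert_iff, Set.mem_singleton_iff, not_or] at hy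
  refine pointwise x y (abs_pos.2 (sub_ne_zero.2 (Ne.symm hy.1))) (abs_sub_lt_iff.2 ⟨?_, ?_⟩)
  · linarith [hyI.1]
  · linarith [lt_of_le_of_ne hyI.2 hy.2]

/-- For an arc-length parametrized closed curve `γ : ℝ/ℤ → ℝ³` (1-periodic, `‖γ'‖ ≡ 1`)
and non-antipodal points (representatives with `0 < |x−y| < 1/2`, so that the circle
distance is `ρ(x,y) = |x−y|` and the intrinsic distance is `D_γ(x,y) = min(|x−y|, 1−|x−y|)`):
the chord/arc identity, the pointwise identity of the O'hara integrand with
`ρ^{−αp/2}·F(⟨γ',γ'⟩(x,y), 1, D_γ/ρ)`, and hence the equality of the O'hara energy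
with the energy `Ẽ^{α,p}(γ')` (written over a fundamental domain for the torus). -/
theorem ohara_energy_eq_tangent_energy (α p : ℝ) (hα : 0 < α) (hp : 0 < p)
    (γ g : ℝ → EuclideanSpace ℝ (Fin 3))
    (hper : Function.Periodic γ 1)
    (hderiv : ∀ x, HasDerivAt γ (g x) x)
    (hunit : ∀ x, ‖g x‖ = 1) :
    (∀ x y : ℝ, 0 < |x - y| → |x - y| < 1 / 2 →
      ‖γ x - γ y‖ ^ 2 / |x - y| ^ 2 =
        1 - (1 / 2) * (((y - x) ^ 2)⁻¹ * ∫ s in x..y, ∫ t in x..y, ‖g s - g t‖ ^ 2)) ∧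
    (∀ x y : ℝ, 0 < |x - y| → |x - y| < 1 / 2 →
      (‖γ x - γ y‖ ^ (-α) - (min |x - y| (1 - |x - y|)) ^ (-α)) ^ (p / 2) =
        |x - y| ^ (-(α * p / 2)) *
          FLag α p (((y - x) ^ 2)⁻¹ * ∫ s in x..y, ∫ t in x..y, ‖g s - g t‖ ^ 2) 1
            (min |x - y| (1 - |x - y|) / |x - y|)) ∧
    (∫ x in (0:ℝ)..1, ∫ y in (x - 1/2)..(x + 1/2),
        (‖γ x - γ y‖ ^ (-α) - (min |x - y| (1 - |x - y|)) ^ (-α)) ^ (p / 2)) =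
      ∫ x in (0:ℝ)..1, ∫ y in (x - 1/2)..(x + 1/2),
        |x - y| ^ (-(α * p / 2)) *
          FLag α p (((y - x) ^ 2)⁻¹ * ∫ s in x..y, ∫ t in x..y, ‖g s - g t‖ ^ 2) 1
            (min |x - y| (1 - |x - y|) / |x - y|) :=
  ohara_energy_eq_tangent_energy_general α p γ g hderiv hunit
end
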